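/- arXiv:1605.05257 — 3 statements merged into one kernel-verified Lean document; each statement's English description precedes it below -/
import Mathlib

section
/- Let n ≥ 1, let ω₁ < ω₂ < ⋯ < ω_n be real numbers and let A₁, …, A_n be nonzero complex numbers. Define the exponential sum g(z) = Σ_{j=1}^n A_j · exp(ω_j · z) for z ∈ ℂ. Then there exists K > 0 such that every zero z of g satisfies |Re z| < K. -/
/-! Each exponential sum is dominated by its term of largest exponent as `Re z → +∞` and by its
term of smallest exponent as `Re z → -∞`: after dividing by the dominant exponential, the other
terms decay like `exp (-c · |Re z|)` with `c > 0`, so they cannot cancel the dominant coefficient. -/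

open Complex Filter Topology Finset

noncomputable section

variable {ι : Type*}

lemma tendsto_sum_mul_exp_atTop (s : Finset ι) (a c : ι → ℝ) (hc : ∀ j ∈ s, c j < 0) :
    Tendsto (fun x => ∑ j ∈ s, a j * Real.exp (c j * x)) atTop (𝓝 0) := by
  simpa using tendsto_finsetSum s fun j hj =>
    (Real.tendsto_exp_atBot.comp (tendsto_id.const_mul_atTop_of_neg (hc j hj))).const_mul (a j)

lemma norm_sum_mul_exp_le (s : Finset ι) (A : ι → ℂ) (c : ι → ℝ) (z : ℂ) :
    ‖∑ j ∈ s, A j * exp (c j * z)‖ ≤ ∑ j ∈ s, ‖A j‖ * Real.exp (c j * z.re) :=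
  (norm_sum_le _ _).trans_eq <| sum_congr rfl fun j _ => by
    rw [norm_mul, norm_exp, re_ofReal_mul]

variable [Fintype ι]

def expSum (A : ι → ℂ) (ω : ι → ℝ) (z : ℂ) : ℂ :=
  ∑ j, A j * exp (ω j * z)

lemma expSum_neg (A : ι → ℂ) (ω : ι → ℝ) (z : ℂ) : expSum A (-ω) (-z) = expSum A ω z := by
  simp only [expSum, Pi.neg_apply, ofReal_neg, neg_mul_neg]

lemma expSum_eq_exp_mul [DecidableEq ι] (A : ι → ℂ) (ω : ι → ℝ) (m : ι) (z : ℂ) :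
    expSum A ω z =
      exp (ω m * z) * (A m + ∑ j ∈ univ.erase m, A j * exp ((ω j - ω m : ℝ) * z)) := by
  rw [expSum, ← add_sum_erase univ _ (mem_univ m), mul_add, mul_sum, mul_comm]
  refine congrArg _ (sum_congr rfl fun j _ => ?_)
  rw [mul_left_comm, ← exp_add]
  push_cast
  ring_nf

theorem exists_expSum_ne_zero_of_le_re (A : ι → ℂ) (ω : ι → ℝ) (m : ι) (hAm : A m ≠ 0)
    (hω : ∀ j ≠ m, ω j < ω m) : ∃ K, ∀ z : ℂ, K ≤ z.re → expSum A ω z ≠ 0 := by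
  classical
  have htail := tendsto_sum_mul_exp_atTop (univ.erase m) (fun j => ‖A j‖) (fun j => ω j - ω m)
    fun j hj => sub_neg.2 (hω j (ne_of_mem_erase hj))
  obtain ⟨K, hK⟩ := eventually_atTop.1 ((tendsto_order.1 htail).2 _ (norm_pos_iff.2 hAm))
  refine ⟨K, fun z hz hzero => ?_⟩
  rw [expSum_eq_exp_mul A ω m, mul_eq_zero, add_eq_zero_iff_eq_neg'] at hzero
  obtain hexp | htail_eq := hzero
  · exact exp_ne_zero _ hexp
  · have := (norm_sum_mul_exp_le _ A _ z).trans_lt (hK _ hz)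
    rw [htail_eq, norm_neg] at this
    exact this.false

end

/-- Part (1) of Dickson's zero-counting theorem for exponential sums:
all zeros of an exponential sum `g z = ∑ j, A j * exp (ω j * z)` with nonzero
coefficients and strictly increasing real exponents lie in a vertical strip
`|Re z| < K`. -/
theorem exp_sum_zeros_in_strip
    (n : ℕ) (hn : 1 ≤ n)
    (ω : Fin n → ℝ) (hω : StrictMono ω)
    (A : Fin n → ℂ) (hA : ∀ j, A j ≠ 0)
    (g : ℂ → ℂ)
    (hg : ∀ z : ℂ, g z = ∑ j : Fin n, A j * Complex.exp ((ω j : ℂ) * z)) :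
    ∃ K > 0, ∀ z : ℂ, g z = 0 → |z.re| < K := by
  obtain ⟨k, rfl⟩ := Nat.exists_eq_add_of_le' hn
  obtain ⟨K₁, hK₁⟩ := exists_expSum_ne_zero_of_le_re A ω (Fin.last k) (hA _)
    fun j hj => hω (Fin.lt_last_iff_ne_last.2 hj)
  obtain ⟨K₂, hK₂⟩ := exists_expSum_ne_zero_of_le_re A (-ω) 0 (hA _)
    fun j hj => neg_lt_neg (hω (Fin.pos_iff_ne_zero.2 hj))
  refine ⟨max (max K₁ K₂) 1, by positivity, fun z hz => ?_⟩
  rw [hg, ← expSum] at hz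
  by_contra! hle
  rcases le_abs'.1 ((le_max_left _ _).trans hle) with hneg | hpos
  · exact hK₂ (-z) (by rw [neg_re]; linarith [le_max_right K₁ K₂]) (by rwa [expSum_neg])
  · exact hK₁ z ((le_max_left _ _).trans hpos) hz
end

section
/- Let a > 0 and let φ, μ be real numbers with φ > μ, and define A(k) = a·exp(i·k·φ) − exp(i·k·μ) for k ∈ ℂ. Then for every α ∈ ℝ and every s > 0, the number N of zeros of A with α ≤ Re k ≤ α + s satisfies |N − s·(φ − μ)/(2π)| ≤ 1. -/
/-!
The equation `a e^{ikφ} = e^{ikμ}` says `log a + ik(φ - μ) ∈ 2πiℤ`, so the zeros of `A` are the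
points `(2πn + i log a) / (φ - μ)`, `n ∈ ℤ`: one row of points spaced `2π / (φ - μ)` apart. A strip
of width `s` therefore contains the zeros indexed by the integers of an interval of length
`s (φ - μ) / (2π)`, and an interval of length `L` contains between `L - 1` and `L + 1` integers.
-/

open Complex Finset
open scoped Real

theorem Int.abs_card_Icc_ceil_floor_sub_le {u v : ℝ} (huv : u ≤ v) :
    |(#(Icc ⌈u⌉ ⌊v⌋) : ℝ) - (v - u)| ≤ 1 := by
  have hceil := Int.ceil_lt_add_one u
  have hfloor := Int.sub_one_lt_floor v
  have hle : ⌈u⌉ ≤ ⌊v⌋ + 1 := by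
    have : ((⌈u⌉ : ℤ) : ℝ) < ⌊v⌋ + 1 + 1 := by linarith
    exact Int.lt_add_one_iff.1 (by exact_mod_cast this)
  have hcard : (#(Icc ⌈u⌉ ⌊v⌋) : ℝ) = ⌊v⌋ + 1 - ⌈u⌉ := by
    exact_mod_cast Int.card_Icc_of_le _ _ hle
  rw [hcard, abs_le]
  constructor <;> linarith [Int.le_ceil u, Int.floor_le v]

theorem mul_exp_sub_exp_eq_zero_iff {a φ μ : ℂ} (ha : a ≠ 0) (hφμ : φ ≠ μ) (k : ℂ) :
    a * exp (I * k * φ) - exp (I * k * μ) = 0 ↔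
      ∃ n : ℤ, k = (2 * π * n + I * log a) / (φ - μ) := by
  rw [sub_eq_zero]
  nth_rw 1 [← exp_log ha]
  rw [← exp_add, exp_eq_exp_iff_exists_int]
  refine exists_congr fun n => ?_
  rw [eq_div_iff (sub_ne_zero.2 hφμ)]
  constructor <;> intro h
  · linear_combination (-I) * h + (k * φ - k * μ - 2 * n * π) * I_sq
  · linear_combination I * h + log a * I_sq

theorem exists_finset_zeros_mul_exp_sub_exp_re_mem_Icc {a : ℂ} (ha : a ≠ 0) {φ μ : ℝ}
    (hφμ : μ < φ) (α : ℝ) {s : ℝ} (hs : 0 ≤ s) :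
    ∃ Z : Finset ℂ,
      (∀ k : ℂ, k ∈ Z ↔ a * exp (I * k * φ) - exp (I * k * μ) = 0 ∧ α ≤ k.re ∧ k.re ≤ α + s) ∧
      |(#Z : ℝ) - s * (φ - μ) / (2 * π)| ≤ 1 := by
  set c := φ - μ
  have hc : 0 < c := sub_pos.2 hφμ
  set z : ℤ → ℂ := fun n => (2 * π * n + I * log a) / (φ - μ)
  have hz_re (n : ℤ) : (z n).re = (2 * π * n - arg a) / c := by
    rw [show z n = (2 * π * n + I * log a) / (c : ℂ) by simp [z, c], div_ofReal_re]
    simp [log_im, sub_eq_add_neg]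
  have hz_inj : Function.Injective z := fun m n h => by
    have := congrArg re h
    rw [hz_re, hz_re, div_left_inj' hc.ne', sub_left_inj,
      mul_right_inj' Real.two_pi_pos.ne'] at this
    exact_mod_cast this
  set u := (α * c + arg a) / (2 * π)
  set v := ((α + s) * c + arg a) / (2 * π)
  have hz_strip (n : ℤ) : (α ≤ (z n).re ∧ (z n).re ≤ α + s) ↔ n ∈ Icc ⌈u⌉ ⌊v⌋ := by
    rw [hz_re, mem_Icc, Int.ceil_le, Int.le_floor, le_div_iff₀ hc, div_le_iff₀ hc,
      div_le_iff₀ Real.two_pi_pos, le_div_iff₀ Real.two_pi_pos]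
    constructor <;> rintro ⟨h₁, h₂⟩ <;> constructor <;> linarith
  refine ⟨(Icc ⌈u⌉ ⌊v⌋).map ⟨z, hz_inj⟩, fun k => ?_, ?_⟩
  · simp only [mem_map, Function.Embedding.coeFn_mk,
      mul_exp_sub_exp_eq_zero_iff ha (ofReal_injective.ne hφμ.ne')]
    constructor
    · rintro ⟨n, hn, rfl⟩
      exact ⟨⟨n, rfl⟩, (hz_strip n).2 hn⟩
    · rintro ⟨⟨n, rfl⟩, hre⟩
      exact ⟨n, (hz_strip n).1 hre, rfl⟩
  · have hvu : v - u = s * c / (2 * π) := by ring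
    rw [card_map, ← hvu]
    exact Int.abs_card_Icc_ceil_floor_sub_le (sub_nonneg.1 (hvu ▸ by positivity))

/-- Strip zero-count for `A k = a exp(i k φ) - exp(i k μ)` (with `a > 0`, `φ > μ` real):
for every `α ∈ ℝ` and `s > 0`, the number `N` of zeros of `A` with
`α ≤ Re k ≤ α + s` satisfies `|N - s (φ - μ) / (2π)| ≤ 1`. -/
theorem leading_term_strip_zero_count
    (a φ μ : ℝ) (ha : 0 < a) (hφμ : μ < φ)
    (A : ℂ → ℂ)
    (hA : ∀ k : ℂ, A k = (a : ℂ) * Complex.exp (Complex.I * k * (φ : ℂ)) -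
        Complex.exp (Complex.I * k * (μ : ℂ))) :
    ∀ α : ℝ, ∀ s : ℝ, 0 < s →
      ∃ Z : Finset ℂ,
        (∀ k : ℂ, k ∈ Z ↔ A k = 0 ∧ α ≤ k.re ∧ k.re ≤ α + s) ∧
        |(Z.card : ℝ) - s * (φ - μ) / (2 * Real.pi)| ≤ 1 := by
  intro α s hs
  obtain ⟨Z, hZ, hcard⟩ :=
    exists_finset_zeros_mul_exp_sub_exp_re_mem_Icc (ofReal_ne_zero.2 ha.ne') hφμ α hs.le
  exact ⟨Z, fun k => hA k ▸ hZ k, hcard⟩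
end

section
/- Let a₁, a₂ > 0 and let φ₁, φ₂, μ be real numbers with φ₁ > μ and φ₂ > μ. Define A₁(k) = a₁·exp(i·k·φ₁) − exp(i·k·μ) and A₂(k) = a₂·exp(i·k·φ₂) − exp(i·k·μ). If A₁ and A₂ have the same zero set, i.e., {k ∈ ℂ : A₁(k) = 0} = {k ∈ ℂ : A₂(k) = 0}, then a₁ = a₂ and φ₁ = φ₂. -/
/-!
With `d = φ - μ > 0`, the zeros of `a exp(ikφ) - exp(ikμ)` are exactly the `k` with
`k d = 2πn + i log a`, `n ∈ ℤ`. The zero `(2π + i log a₁) / d₁` of `A₁` is a zero of `A₂`;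
comparing real and imaginary parts gives `d₂ ∈ ℤ d₁` and `log a₁ / d₁ = log a₂ / d₂`.
By symmetry also `d₁ ∈ ℤ d₂`, which forces `d₁ = d₂` and then `a₁ = a₂`.
-/

open Complex
open scoped Real

noncomputable def leadingTerm (a φ μ : ℝ) (k : ℂ) : ℂ :=
  a * exp (I * k * φ) - exp (I * k * μ)

lemma ofReal_mul_exp_eq_one_iff {a : ℝ} (ha : 0 < a) (z : ℂ) :
    (a : ℂ) * exp z = 1 ↔ ∃ n : ℤ, z = n * (2 * π * I) - Real.log a := by
  rw [← Real.exp_log ha, ofReal_exp, ← exp_add, exp_eq_one_iff, Real.log_exp]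
  exact exists_congr fun n => ⟨fun h => by linear_combination h, fun h => by linear_combination h⟩

lemma leadingTerm_eq_zero_iff {a : ℝ} (ha : 0 < a) (φ μ : ℝ) (k : ℂ) :
    leadingTerm a φ μ k = 0 ↔ ∃ n : ℤ, k * (φ - μ : ℝ) = 2 * π * n + I * Real.log a := by
  have hsplit : exp (I * k * φ) = exp (I * k * (φ - μ : ℝ)) * exp (I * k * μ) := by
    rw [← exp_add]; push_cast; ring_nf
  rw [leadingTerm, sub_eq_zero, hsplit, ← mul_assoc, mul_eq_right₀ (exp_ne_zero _),
    ofReal_mul_exp_eq_one_iff ha]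
  refine exists_congr fun n => ⟨fun h => ?_, fun h => ?_⟩
  · linear_combination (-I) * h + (k * (φ - μ : ℝ) - 2 * π * n) * I_sq
  · linear_combination I * h + (Real.log a : ℂ) * I_sq

lemma exists_int_of_zeroSet_subset {a₁ a₂ φ₁ φ₂ μ : ℝ} (ha₁ : 0 < a₁) (ha₂ : 0 < a₂)
    (hφ₁ : φ₁ ≠ μ)
    (h : {k | leadingTerm a₁ φ₁ μ k = 0} ⊆ {k | leadingTerm a₂ φ₂ μ k = 0}) :
    ∃ m : ℤ, φ₂ - μ = m * (φ₁ - μ) ∧ Real.log a₁ * (φ₂ - μ) = Real.log a₂ * (φ₁ - μ) := by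
  have hd : ((φ₁ - μ : ℝ) : ℂ) ≠ 0 := ofReal_ne_zero.mpr (sub_ne_zero.mpr hφ₁)
  set k : ℂ := (2 * π + I * Real.log a₁) / (φ₁ - μ : ℝ)
  have hk₁ : k * (φ₁ - μ : ℝ) = 2 * π + I * Real.log a₁ := div_mul_cancel₀ _ hd
  obtain ⟨m, hk₂⟩ := (leadingTerm_eq_zero_iff ha₂ φ₂ μ k).mp
    (h ((leadingTerm_eq_zero_iff ha₁ φ₁ μ k).mpr ⟨1, by rw [hk₁]; push_cast; ring⟩))
  have hcross : (2 * π + I * Real.log a₁) * (φ₂ - μ : ℝ) =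
      (2 * π * m + I * Real.log a₂) * (φ₁ - μ : ℝ) := by
    rw [← hk₁, ← hk₂]; ring
  have hre := congrArg re hcross
  have him := congrArg im hcross
  simp only [ofReal_sub, mul_re, add_re, re_ofNat, ofReal_re, im_ofNat, ofReal_im, mul_zero,
    sub_zero, I_re, zero_mul, I_im, sub_self, add_zero, sub_re, add_im, mul_im, one_mul, zero_add,
    sub_im, intCast_re, intCast_im] at hre him
  exact ⟨m, mul_left_cancel₀ Real.two_pi_pos.ne' (by linear_combination hre), him⟩

lemma eq_of_eq_int_mul_of_eq_int_mul {x y : ℝ} (hx : 0 < x) (hy : 0 < y) {m n : ℤ}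
    (hm : y = m * x) (hn : x = n * y) : x = y := by
  have hmn : m * n = 1 := by
    have : ((m * n : ℤ) : ℝ) * x = 1 * x := by push_cast; linear_combination -hn - n * hm
    exact_mod_cast mul_right_cancel₀ hx.ne' this
  have hm_pos : (0 : ℝ) < m := pos_of_mul_pos_left (hm ▸ hy) hx.le
  rw [hm, Int.eq_one_of_mul_eq_one_right (by exact_mod_cast hm_pos.le) hmn]
  simp

/-- The zero set of the leading term `Aⱼ k = aⱼ exp(i k φⱼ) - exp(i k μ)` determines
both the geometric-optics amplitude `aⱼ` and the travel time `φⱼ`: if the two zero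
sets coincide then `a₁ = a₂` and `φ₁ = φ₂`. -/
theorem leading_term_determined_by_zero_set
    (a₁ a₂ φ₁ φ₂ μ : ℝ) (ha₁ : 0 < a₁) (ha₂ : 0 < a₂)
    (hφ₁ : μ < φ₁) (hφ₂ : μ < φ₂)
    (A₁ A₂ : ℂ → ℂ)
    (hA₁ : ∀ k : ℂ, A₁ k = (a₁ : ℂ) * Complex.exp (Complex.I * k * (φ₁ : ℂ)) -
        Complex.exp (Complex.I * k * (μ : ℂ)))
    (hA₂ : ∀ k : ℂ, A₂ k = (a₂ : ℂ) * Complex.exp (Complex.I * k * (φ₂ : ℂ)) -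
        Complex.exp (Complex.I * k * (μ : ℂ)))
    (hzero : {k : ℂ | A₁ k = 0} = {k : ℂ | A₂ k = 0}) :
    a₁ = a₂ ∧ φ₁ = φ₂ := by
  obtain rfl : A₁ = leadingTerm a₁ φ₁ μ := funext hA₁
  obtain rfl : A₂ = leadingTerm a₂ φ₂ μ := funext hA₂
  obtain ⟨m, hm, hlog⟩ := exists_int_of_zeroSet_subset ha₁ ha₂ hφ₁.ne' hzero.subset
  obtain ⟨n, hn, -⟩ := exists_int_of_zeroSet_subset ha₂ ha₁ hφ₂.ne' hzero.symm.subset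
  have hd : φ₁ - μ = φ₂ - μ :=
    eq_of_eq_int_mul_of_eq_int_mul (sub_pos.mpr hφ₁) (sub_pos.mpr hφ₂) hm hn
  rw [hd, mul_left_inj' (sub_pos.mpr hφ₂).ne'] at hlog
  exact ⟨Real.log_injOn_pos ha₁ ha₂ hlog, sub_left_injective hd⟩
end
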